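/- arXiv:2504.02049 — 2 statements merged into one kernel-verified Lean document; each statement's English description precedes it below -/
import Mathlib

section
/- If each edge potential U_e is differentiable and convex and each node objective f_i is convex, then the nonlinear homological program — minimize Σ_i f_i(x_i) subject to L_F^{∇U} x = 0 — is a convex optimization problem; in particular, the feasible set {x : L_F^{∇U} x = 0} is closed and convex. -/
/-!
STATEMENT 3: If each edge potential U_e is differentiable and convex and each node
objective f_i is convex (valued in ℝ ∪ {∞}), then the nonlinear homological program
is a convex optimization problem; in particular the feasible set {x : L_F^{∇U} x = 0}
is closed and convex.
-/

open scoped InnerProductSpace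

/-- Convexity for extended-real-valued functions (values in `ℝ ∪ {∞} ⊆ EReal`). -/
def ERealConvexOn {α : Type*} [AddCommMonoid α] [Module ℝ α] (f : α → EReal) : Prop :=
  ∀ x y : α, ∀ a b : ℝ, 0 ≤ a → 0 ≤ b → a + b = 1 →
    f (a • x + b • y) ≤ (a : EReal) * f x + (b : EReal) * f y

variable {V : Type*} [Fintype V] {E : Type*} [Fintype E]

/-- The coboundary operator of a cellular sheaf on a graph with oriented edges. -/
noncomputable def coboundary
    (Vs : V → Type*) [∀ i, NormedAddCommGroup (Vs i)] [∀ i, InnerProductSpace ℝ (Vs i)]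
    (Es : E → Type*) [∀ e, NormedAddCommGroup (Es e)] [∀ e, InnerProductSpace ℝ (Es e)]
    (s t : E → V)
    (F1 : ∀ e, Vs (s e) →ₗ[ℝ] Es e) (F2 : ∀ e, Vs (t e) →ₗ[ℝ] Es e) :
    PiLp 2 Vs →ₗ[ℝ] PiLp 2 Es :=
  (WithLp.linearEquiv 2 ℝ (∀ e, Es e)).symm.toLinearMap ∘ₗ
    LinearMap.pi (fun e =>
      F1 e ∘ₗ (LinearMap.proj (s e)) ∘ₗ (WithLp.linearEquiv 2 ℝ (∀ i, Vs i)).toLinearMap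
      - F2 e ∘ₗ (LinearMap.proj (t e)) ∘ₗ (WithLp.linearEquiv 2 ℝ (∀ i, Vs i)).toLinearMap)

/-!
The Laplacian `L = δᵀ ∘ ∇U ∘ δ` is the gradient of the convex energy `U ∘ δ`, so by first-order
optimality its zeros are exactly the minimizers of `U ∘ δ`. These form the intersection of the
sublevel sets `{x | U (δ x) ≤ U (δ y)}`, each convex and closed. The objective is a sum of convex
functions of single coordinates.
-/

open Set

namespace ERealConvexOn

variable {α β : Type*} [AddCommMonoid α] [Module ℝ α] [AddCommMonoid β] [Module ℝ β]

lemma add {f g : α → EReal} (hf : ERealConvexOn f) (hg : ERealConvexOn g) :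
    ERealConvexOn (f + g) := by
  intro x y a b ha hb hab
  have distrib (c : ℝ) (hc : 0 ≤ c) (p q : EReal) : (c : EReal) * (p + q) = c * p + c * q :=
    EReal.left_distrib_of_nonneg_of_ne_top (EReal.coe_nonneg.mpr hc) (EReal.coe_ne_top c) p q
  calc f (a • x + b • y) + g (a • x + b • y)
      ≤ (a * f x + b * f y) + (a * g x + b * g y) :=
        add_le_add (hf x y a b ha hb hab) (hg x y a b ha hb hab)
    _ = a * (f x + g x) + b * (f y + g y) := by
        rw [distrib a ha, distrib b hb, add_add_add_comm]

lemma sum {ι : Type*} (s : Finset ι) {f : ι → α → EReal} (hf : ∀ i ∈ s, ERealConvexOn (f i)) :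
    ERealConvexOn (fun x => ∑ i ∈ s, f i x) := by
  induction s using Finset.cons_induction with
  | empty => intro x y a b _ _ _; simp
  | cons i s _ ih =>
    simp only [Finset.sum_cons]
    exact (hf i (Finset.mem_cons_self i s)).add (ih fun j hj => hf j (Finset.mem_cons_of_mem hj))

lemma comp_linearMap {f : β → EReal} (hf : ERealConvexOn f) (ℓ : α →ₗ[ℝ] β) :
    ERealConvexOn (f ∘ ℓ) := by
  intro x y a b ha hb hab
  simpa only [Function.comp_apply, map_add, map_smul] using hf (ℓ x) (ℓ y) a b ha hb hab

end ERealConvexOn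

lemma ConvexOn.sum {𝕜 X β ι : Type*} [Semiring 𝕜] [PartialOrder 𝕜] [AddCommMonoid X]
    [AddCommMonoid β] [PartialOrder β] [IsOrderedAddMonoid β] [SMul 𝕜 X] [Module 𝕜 β]
    {s : Set X} (hs : Convex 𝕜 s) (t : Finset ι) {f : ι → X → β}
    (hf : ∀ i ∈ t, ConvexOn 𝕜 s (f i)) : ConvexOn 𝕜 s (fun x => ∑ i ∈ t, f i x) := by
  induction t using Finset.cons_induction with
  | empty => simpa using convexOn_const (0 : β) hs
  | cons i t _ ih =>
    simp only [Finset.sum_cons]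
    exact (hf i (Finset.mem_cons_self i t)).add (ih fun j hj => hf j (Finset.mem_cons_of_mem hj))

lemma setOf_isMinOn_univ_eq_iInter {α β : Type*} [Preorder β] (f : α → β) :
    {x | IsMinOn f univ x} = ⋂ y, {x | f x ≤ f y} := by
  ext x
  simp [isMinOn_univ_iff]

lemma ConvexOn.convex_setOf_isMinOn_univ {𝕜 X β : Type*} [Semiring 𝕜] [PartialOrder 𝕜]
    [AddCommMonoid X] [AddCommMonoid β] [PartialOrder β] [IsOrderedAddMonoid β] [SMul 𝕜 X]
    [Module 𝕜 β] [PosSMulMono 𝕜 β] {f : X → β} (hf : ConvexOn 𝕜 univ f) :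
    Convex 𝕜 {x | IsMinOn f univ x} := by
  rw [setOf_isMinOn_univ_eq_iInter]
  exact convex_iInter fun y => by simpa using hf.convex_le (f y)

lemma Continuous.isClosed_setOf_isMinOn_univ {α β : Type*} [TopologicalSpace α]
    [TopologicalSpace β] [Preorder β] [OrderClosedTopology β] {f : α → β} (hf : Continuous f) :
    IsClosed {x | IsMinOn f univ x} := by
  rw [setOf_isMinOn_univ_eq_iInter]
  exact isClosed_iInter fun y => isClosed_le hf continuous_const

lemma ConvexOn.isMinOn_univ_of_hasFDerivAt_zero {X : Type*} [NormedAddCommGroup X]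
    [NormedSpace ℝ X] {f : X → ℝ} {x : X} (hf : ConvexOn ℝ univ f)
    (hx : HasFDerivAt f (0 : X →L[ℝ] ℝ) x) : IsMinOn f univ x := by
  refine isMinOn_univ_iff.mpr fun y => ?_
  -- on the line `φ t = f (x + t • (y - x))`, convexity gives `0 = φ' 0 ≤ φ 1 - φ 0`
  set φ : ℝ → ℝ := f ∘ AffineMap.lineMap (k := ℝ) x y
  have hφ : ConvexOn ℝ univ φ := by simpa using hf.comp_affineMap (AffineMap.lineMap (k := ℝ) x y)
  have hx' : HasFDerivAt f (0 : X →L[ℝ] ℝ) (AffineMap.lineMap (k := ℝ) x y 0) := by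
    rwa [AffineMap.lineMap_apply_zero]
  have hφ' : HasDerivAt φ 0 0 := by
    simpa using hx'.comp_hasDerivAt (0 : ℝ) AffineMap.hasDerivAt_lineMap
  have := hφ.le_slope_of_hasDerivAt (mem_univ 0) (mem_univ 1) zero_lt_one hφ'
  simpa [φ, slope_def_field] using this

section Gradient

variable {F G : Type*} [NormedAddCommGroup F] [InnerProductSpace ℝ F] [CompleteSpace F]
  [NormedAddCommGroup G] [InnerProductSpace ℝ G] [CompleteSpace G]

lemma ConvexOn.isMinOn_univ_iff_of_hasGradientAt {g : F → ℝ} {g' : F} {x : F}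
    (hg : ConvexOn ℝ univ g) (hx : HasGradientAt g g' x) : IsMinOn g univ x ↔ g' = 0 := by
  have hx := hasGradientAt_iff_hasFDerivAt.mp hx
  constructor
  · intro hmin
    simpa using (hmin.isLocalMin Filter.univ_mem).hasFDerivAt_eq_zero hx
  · rintro rfl
    exact hg.isMinOn_univ_of_hasFDerivAt_zero (by simpa using hx)

lemma HasGradientAt.comp_continuousLinearMap {g : G → ℝ} {g' : G} {x : F} (A : F →L[ℝ] G)
    (hg : HasGradientAt g g' (A x)) : HasGradientAt (g ∘ A) (A.adjoint g') x := by
  rw [hasGradientAt_iff_hasFDerivAt] at hg ⊢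
  refine (hg.comp x A.hasFDerivAt).congr_fderiv ?_
  ext v
  simp [ContinuousLinearMap.adjoint_inner_left]

lemma hasGradientAt_piLp_sum {ι : Type*} [Fintype ι] {Fs : ι → Type*}
    [∀ i, NormedAddCommGroup (Fs i)] [∀ i, InnerProductSpace ℝ (Fs i)] [∀ i, CompleteSpace (Fs i)]
    {u : ∀ i, Fs i → ℝ} {u' : ∀ i, Fs i} {y : PiLp 2 Fs}
    (hu : ∀ i, HasGradientAt (u i) (u' i) (y i)) :
    HasGradientAt (fun y : PiLp 2 Fs => ∑ i, u i (y i)) (WithLp.toLp 2 u') y := by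
  rw [hasGradientAt_iff_hasFDerivAt]
  have hterm (i : ι) : HasFDerivAt (fun y : PiLp 2 Fs => u i (y i))
      ((InnerProductSpace.toDual ℝ (Fs i) (u' i)).comp (PiLp.proj 2 Fs i)) y :=
    (hasGradientAt_iff_hasFDerivAt.mp (hu i)).comp y (PiLp.proj 2 Fs i).hasFDerivAt
  refine (HasFDerivAt.fun_sum fun i _ => hterm i).congr_fderiv ?_
  ext v
  simp [PiLp.inner_apply]

end Gradient

lemma convexOn_piLp_sum {ι : Type*} [Fintype ι] {Fs : ι → Type*}
    [∀ i, NormedAddCommGroup (Fs i)] [∀ i, InnerProductSpace ℝ (Fs i)] {u : ∀ i, Fs i → ℝ}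
    (hu : ∀ i, ConvexOn ℝ univ (u i)) : ConvexOn ℝ univ (fun y : PiLp 2 Fs => ∑ i, u i (y i)) :=
  ConvexOn.sum convex_univ Finset.univ fun i _ =>
    (hu i).comp_linearMap (PiLp.proj 2 (𝕜 := ℝ) Fs i).toLinearMap

theorem homological_program_convex
    (Vs : V → Type*) [∀ i, NormedAddCommGroup (Vs i)] [∀ i, InnerProductSpace ℝ (Vs i)]
    [∀ i, FiniteDimensional ℝ (Vs i)]
    (Es : E → Type*) [∀ e, NormedAddCommGroup (Es e)] [∀ e, InnerProductSpace ℝ (Es e)]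
    [∀ e, FiniteDimensional ℝ (Es e)]
    (s t : E → V)
    (F1 : ∀ e, Vs (s e) →ₗ[ℝ] Es e) (F2 : ∀ e, Vs (t e) →ₗ[ℝ] Es e)
    -- edge potentials, their gradients, convexity and differentiability
    (Ue : ∀ e, Es e → ℝ) (gUe : ∀ e, Es e → Es e)
    (hUconv : ∀ e, ConvexOn ℝ Set.univ (Ue e))
    (hUgrad : ∀ e (y : Es e), HasGradientAt (Ue e) (gUe e y) y)
    -- node objectives, convex, valued in ℝ ∪ {∞}
    (f : ∀ i, Vs i → EReal) (hf : ∀ i, ERealConvexOn (f i))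
    -- the nonlinear sheaf Laplacian L = δᵀ ∘ ∇U ∘ δ
    (L : PiLp 2 Vs → PiLp 2 Vs)
    (hL : ∀ x, L x = LinearMap.adjoint (coboundary Vs Es s t F1 F2)
      ((WithLp.equiv 2 (∀ e, Es e)).symm
        (fun e => gUe e (coboundary Vs Es s t F1 F2 x e)))) :
    Convex ℝ {x : PiLp 2 Vs | L x = 0} ∧ IsClosed {x : PiLp 2 Vs | L x = 0} ∧
      ERealConvexOn (fun x : PiLp 2 Vs => ∑ i : V, f i (x i)) := by
  set δ := coboundary Vs Es s t F1 F2
  let U : PiLp 2 Es → ℝ := fun y => ∑ e, Ue e (y e)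
  have hconv : ConvexOn ℝ univ (U ∘ δ) := by
    simpa using (convexOn_piLp_sum hUconv).comp_linearMap δ
  have hgrad (x : PiLp 2 Vs) : HasGradientAt (U ∘ δ) (L x) x := by
    have h := (hasGradientAt_piLp_sum fun e => hUgrad e _).comp_continuousLinearMap
      (LinearMap.toContinuousLinearMap δ) (x := x)
    rw [← LinearMap.adjoint_toContinuousLinearMap] at h
    rw [hL]
    exact h
  have hfeasible : {x | L x = 0} = {x | IsMinOn (U ∘ δ) univ x} := by
    ext x
    exact (hconv.isMinOn_univ_iff_of_hasGradientAt (hgrad x)).symm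
  refine ⟨hfeasible ▸ hconv.convex_setOf_isMinOn_univ,
    hfeasible ▸ Continuous.isClosed_setOf_isMinOn_univ ?_,
    ERealConvexOn.sum Finset.univ fun i _ =>
      (hf i).comp_linearMap (PiLp.proj 2 (𝕜 := ℝ) Vs i).toLinearMap⟩
  exact continuous_iff_continuousAt.mpr fun x => (hgrad x).continuousAt
end

section
/- Let each edge potential U_e be differentiable and strongly convex with unique minimizer b_e satisfying U_e(b_e) = 0, and let b = (b_e)_{e∈E}. If b ∈ image(δ), then the zero set of the nonlinear sheaf Laplacian is the affine subspace δ⁺b + ker δ; that is, L_F^{∇U} x = 0 if and only if x = δ⁺b + h for some h with δh = 0. -/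
/-!
If `δᵀ ∇U(δx) = 0` and `b = δp`, then pairing with `x - p` gives
`∑ₑ ⟪∇Uₑ((δx)ₑ), (δx)ₑ - bₑ⟫ = 0`. Since `bₑ` minimizes the convex `Uₑ`, the first-order
condition makes every summand at least `Uₑ((δx)ₑ) - Uₑ(bₑ) ≥ 0`, so each vanishes, each
`(δx)ₑ` is a minimizer too, and strict convexity forces `δx = b`. Conversely `δx = b` makes
`∇U(δx) = ∇U(b) = 0`. Finally `δx = δ(δ⁺b)` says exactly that `x ∈ δ⁺b + ker δ`.
-/

variable {C0 : Type*} [NormedAddCommGroup C0] [InnerProductSpace ℝ C0] [FiniteDimensional ℝ C0]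
variable {E : Type*} [Fintype E]
variable (Es : E → Type*) [∀ e, NormedAddCommGroup (Es e)] [∀ e, InnerProductSpace ℝ (Es e)]
  [∀ e, FiniteDimensional ℝ (Es e)]

/-- `δ⁺ b` for `b ∈ image δ`: the unique preimage of `b` lying in `(ker δ)ᗮ = image δᵀ`,
i.e. the Moore–Penrose pseudoinverse applied to `b`. -/
noncomputable def pinvVec {C1 : Type*} [NormedAddCommGroup C1] [InnerProductSpace ℝ C1]
    (δ : C0 →ₗ[ℝ] C1) (b : C1) (hb : b ∈ LinearMap.range δ) : C0 :=
  (Submodule.orthogonalProjection (LinearMap.ker δ)ᗮ hb.choose : C0)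

open RealInnerProductSpace Set

section Gradient

variable {F : Type*} [NormedAddCommGroup F] [InnerProductSpace ℝ F] [CompleteSpace F]
  {f : F → ℝ} {g y b : F}

theorem ConvexOn.add_inner_sub_le_of_hasGradientAt (hf : ConvexOn ℝ univ f)
    (hg : HasGradientAt f g y) (z : F) : f y + ⟪g, z - y⟫ ≤ f z := by
  set φ : ℝ → ℝ := fun t => f (y + t • (z - y))
  have hφ : ConvexOn ℝ univ φ := by
    have hcomp : φ = f ∘ AffineMap.lineMap y z := by
      funext t
      simp [φ, AffineMap.lineMap_apply, add_comm]
    simpa [hcomp] using hf.comp_affineMap (AffineMap.lineMap y z)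
  have hline : HasDerivAt (fun t : ℝ => y + t • (z - y)) (z - y) 0 := by
    simpa using ((hasDerivAt_id (0 : ℝ)).smul_const (z - y)).const_add y
  have hφ' : HasDerivAt φ ⟪g, z - y⟫ 0 := by
    have hF : HasFDerivAt f (InnerProductSpace.toDual ℝ F g : F →L[ℝ] ℝ)
        (y + (0 : ℝ) • (z - y)) := by simpa using hg.hasFDerivAt
    have h := hF.comp_hasDerivAt (0 : ℝ) hline
    rwa [InnerProductSpace.toDual_apply_apply] at h
  have hslope := hφ.le_slope_of_hasDerivAt (mem_univ 0) (mem_univ 1) one_pos hφ'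
  simp only [slope_def_field, φ] at hslope
  norm_num at hslope
  linarith

theorem IsMinOn.eq_zero_of_hasGradientAt (hmin : IsMinOn f univ y)
    (hg : HasGradientAt f g y) : g = 0 := by
  have h := (hmin.isLocalMin Filter.univ_mem).hasFDerivAt_eq_zero hg.hasFDerivAt
  exact (InnerProductSpace.toDual ℝ F).map_eq_zero_iff.mp h

theorem ConvexOn.sub_le_inner_sub_of_hasGradientAt (hf : ConvexOn ℝ univ f)
    (hg : HasGradientAt f g y) (z : F) : f y - f z ≤ ⟪g, y - z⟫ := by
  have h := hf.add_inner_sub_le_of_hasGradientAt hg z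
  rw [← neg_sub, inner_neg_right] at h
  linarith

theorem ConvexOn.inner_sub_nonneg_of_isMinOn (hf : ConvexOn ℝ univ f)
    (hg : HasGradientAt f g y) (hb : IsMinOn f univ b) : 0 ≤ ⟪g, y - b⟫ :=
  (sub_nonneg.mpr (hb (mem_univ y))).trans (hf.sub_le_inner_sub_of_hasGradientAt hg b)

theorem StrictConvexOn.eq_of_inner_sub_eq_zero (hf : StrictConvexOn ℝ univ f)
    (hg : HasGradientAt f g y) (hb : IsMinOn f univ b) (h : ⟪g, y - b⟫ = 0) : y = b := by
  have hyb : f y ≤ f b := by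
    linarith [hf.convexOn.sub_le_inner_sub_of_hasGradientAt hg b]
  have hy : IsMinOn f univ y := fun z _ => hyb.trans (hb (mem_univ z))
  exact hf.eq_of_isMinOn hy hb (mem_univ y) (mem_univ b)

end Gradient

theorem eq_of_sum_inner_sub_eq_zero {ι : Type*} [Fintype ι] {F : ι → Type*}
    [∀ i, NormedAddCommGroup (F i)] [∀ i, InnerProductSpace ℝ (F i)] [∀ i, CompleteSpace (F i)]
    {f : ∀ i, F i → ℝ} {g y b : ∀ i, F i} (hf : ∀ i, StrictConvexOn ℝ univ (f i))
    (hg : ∀ i, HasGradientAt (f i) (g i) (y i)) (hb : ∀ i, IsMinOn (f i) univ (b i))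
    (h : ∑ i, ⟪g i, y i - b i⟫ = 0) : y = b := by
  have hnonneg : ∀ i ∈ Finset.univ, 0 ≤ ⟪g i, y i - b i⟫ := fun i _ =>
    (hf i).convexOn.inner_sub_nonneg_of_isMinOn (hg i) (hb i)
  have hzero := (Finset.sum_eq_zero_iff_of_nonneg hnonneg).mp h
  funext i
  exact (hf i).eq_of_inner_sub_eq_zero (hg i) (hb i) (hzero i (Finset.mem_univ i))

theorem map_pinvVec {C1 : Type*} [NormedAddCommGroup C1] [InnerProductSpace ℝ C1]
    (δ : C0 →ₗ[ℝ] C1) (b : C1) (hb : b ∈ LinearMap.range δ) :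
    δ (pinvVec δ b hb) = b := by
  have hker : hb.choose - pinvVec δ b hb ∈ LinearMap.ker δ := by
    simpa only [pinvVec, Submodule.orthogonal_orthogonal, Submodule.starProjection_apply] using
      Submodule.sub_starProjection_mem_orthogonal (K := (LinearMap.ker δ)ᗮ) hb.choose
  rw [LinearMap.sub_mem_ker_iff, hb.choose_spec] at hker
  exact hker.symm

theorem exists_mem_ker_eq_add_iff {R M N : Type*} [Ring R] [AddCommGroup M] [AddCommGroup N]
    [Module R M] [Module R N] (δ : M →ₗ[R] N) (x p : M) :
    (∃ h ∈ LinearMap.ker δ, x = p + h) ↔ δ x = δ p := by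
  rw [← LinearMap.sub_mem_ker_iff]
  constructor
  · rintro ⟨h, hh, rfl⟩
    simpa using hh
  · exact fun hx => ⟨x - p, hx, by abel⟩

theorem zero_set_of_nonlinear_laplacian_eq_affine
    (δ : C0 →ₗ[ℝ] PiLp 2 Es)
    (Ue : ∀ e, Es e → ℝ) (gUe : ∀ e, Es e → Es e) (b : ∀ e, Es e)
    (m : E → ℝ) (hm : ∀ e, 0 < m e)
    (hsc : ∀ e, StrongConvexOn Set.univ (m e) (Ue e))
    (hgrad : ∀ e (y : Es e), HasGradientAt (Ue e) (gUe e y) y)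
    (hbmin : ∀ e, IsMinOn (Ue e) Set.univ (b e))
    (hrange : (WithLp.equiv 2 (∀ e, Es e)).symm b ∈ LinearMap.range δ) :
    ∀ x : C0,
      LinearMap.adjoint δ
          ((WithLp.equiv 2 (∀ e, Es e)).symm (fun e => gUe e ((δ x) e))) = 0 ↔
        ∃ h ∈ LinearMap.ker δ,
          x = pinvVec δ ((WithLp.equiv 2 (∀ e, Es e)).symm b) hrange + h := by
  intro x
  rw [exists_mem_ker_eq_add_iff, map_pinvVec]
  constructor
  · intro hzero
    have hpair : ∑ e, ⟪gUe e ((δ x) e), (δ x) e - b e⟫ = 0 := by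
      have h := LinearMap.adjoint_inner_left δ (x - pinvVec δ _ hrange)
        ((WithLp.equiv 2 (∀ e, Es e)).symm (fun e => gUe e ((δ x) e)))
      rw [hzero, inner_zero_left, map_sub, map_pinvVec, PiLp.inner_apply] at h
      exact h.symm
    have hδx := eq_of_sum_inner_sub_eq_zero (fun e => (hsc e).strictConvexOn (hm e))
      (fun e => hgrad e _) hbmin hpair
    exact congrArg (WithLp.equiv 2 (∀ e, Es e)).symm hδx
  · intro hδx
    have hgrad_zero : (fun e => gUe e ((δ x) e)) = 0 := by
      funext e
      refine (hbmin e).eq_zero_of_hasGradientAt ?_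
      simpa [hδx] using hgrad e (b e)
    simp [hgrad_zero]
end
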